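/- arXiv:1912.10895 — 3 statements merged into one kernel-verified Lean document; each statement's English description precedes it below -/
import Mathlib

section
/- Let u ∈ C₀^∞(ℝ) with momentum density y = u - u_xx satisfying y ≤ 0 on (-∞, x₀] and y ≥ 0 on [x₀, +∞) for some x₀ ∈ ℝ. Then u_x(x) ≥ u(x) for all x ≤ x₀ and u_x(x) ≥ -u(x) for all x ≥ x₀. -/
open MeasureTheory Real

/-- For `u ∈ C₀^∞(ℝ)` with momentum density `y = u - u_xx` nonpositive on `(-∞, x₀]` and
nonnegative on `[x₀, ∞)`, one has `u_x ≥ u` on `(-∞, x₀]` and `u_x ≥ -u` on `[x₀, ∞)`. -/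
theorem stmt3 (u : ℝ → ℝ) (x₀ : ℝ)
    (hsmooth : ContDiff ℝ (⊤ : ℕ∞) u) (hsupp : HasCompactSupport u)
    (hyneg : ∀ x ≤ x₀, u x - deriv (deriv u) x ≤ 0)
    (hypos : ∀ x ≥ x₀, 0 ≤ u x - deriv (deriv u) x) :
    (∀ x ≤ x₀, u x ≤ deriv u x) ∧ (∀ x ≥ x₀, -u x ≤ deriv u x) := by
  have hu : Differentiable ℝ u := hsmooth.differentiable (by simp)
  have hs : ContDiff ℝ ((⊤:ℕ∞) : WithTop ℕ∞) u := hsmooth.of_le (by simp)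
  have hcd : ContDiff ℝ ((⊤:ℕ∞) : WithTop ℕ∞) (deriv u) := (contDiff_infty_iff_deriv.mp hs).2
  have hu' : Differentiable ℝ (deriv u) := hcd.differentiable (by simp)
  -- bound on support
  obtain ⟨R, hR⟩ := (hsupp.isCompact.isBounded).subset_closedBall 0
  have hzero : ∀ t : ℝ, R < |t| → u t = 0 ∧ deriv u t = 0 := by
    intro t ht
    have hnt : t ∉ tsupport u := by
      intro hmem
      have := hR hmem
      simp [Metric.mem_closedBall, Real.dist_eq] at this
      linarith
    constructor
    · exact image_eq_zero_of_notMem_tsupport hnt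
    · by_contra h
      exact hnt (support_deriv_subset (by simpa using h))
  constructor
  · -- h t = exp t * (deriv u t - u t), increasing on (-∞, x₀]
    intro x hx
    set h : ℝ → ℝ := fun t => Real.exp t * (deriv u t - u t) with hh
    have hd : ∀ t, HasDerivAt h (Real.exp t * (deriv (deriv u) t - u t)) t := by
      intro t
      have h1 : HasDerivAt (fun t => deriv u t - u t)
          (deriv (deriv u) t - deriv u t) t := ((hu' t).hasDerivAt).sub ((hu t).hasDerivAt)
      have : HasDerivAt (fun t => Real.exp t * (deriv u t - u t))
          (Real.exp t * (deriv u t - u t) + Real.exp t * (deriv (deriv u) t - deriv u t)) t :=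
        (Real.hasDerivAt_exp t).mul h1
      convert this using 1
      ring
    set a : ℝ := min x (-(|R| + 1)) with ha
    have hax : a ≤ x := min_le_left _ _
    have haR : R < |a| := by
      have h1 : a ≤ -(|R| + 1) := min_le_right _ _
      have h2 : |R| + 1 ≤ |a| := le_trans (by linarith) (neg_le_abs a)
      linarith [le_abs_self R]
    have hha : h a = 0 := by
      obtain ⟨h1, h2⟩ := hzero a haR
      simp [hh, h1, h2]
    have hmono : MonotoneOn h (Set.Icc a x) := by
      apply monotoneOn_of_deriv_nonneg (convex_Icc a x)
      · exact fun t _ => ((hd t).continuousAt).continuousWithinAt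
      · exact fun t _ => ((hd t).differentiableAt).differentiableWithinAt
      · intro t ht
        rw [(hd t).deriv]
        have htx : t ≤ x₀ := by
          have := (Set.mem_Icc.mp (interior_subset ht)).2
          linarith
        have := hyneg t htx
        nlinarith [Real.exp_pos t]
    have := hmono (Set.left_mem_Icc.mpr hax) (Set.right_mem_Icc.mpr hax) hax
    rw [hha] at this
    simp only [hh] at this
    have hex := Real.exp_pos x
    nlinarith
  · -- g t = exp (-t) * (deriv u t + u t), decreasing on [x₀, ∞)
    intro x hx
    set g : ℝ → ℝ := fun t => Real.exp (-t) * (deriv u t + u t) with hg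
    have hd : ∀ t, HasDerivAt g (Real.exp (-t) * (deriv (deriv u) t - u t)) t := by
      intro t
      have he : HasDerivAt (fun t : ℝ => Real.exp (-t)) (-Real.exp (-t)) t := by
        have : HasDerivAt (fun t : ℝ => Real.exp (-t)) (Real.exp (-t) * -1) t :=
          (Real.hasDerivAt_exp (-t)).comp t (hasDerivAt_neg t)
        simpa [mul_comm] using this
      have h1 : HasDerivAt (fun t => deriv u t + u t)
          (deriv (deriv u) t + deriv u t) t := ((hu' t).hasDerivAt).add ((hu t).hasDerivAt)
      have : HasDerivAt (fun t => Real.exp (-t) * (deriv u t + u t))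
          (-Real.exp (-t) * (deriv u t + u t) + Real.exp (-t) * (deriv (deriv u) t + deriv u t)) t :=
        he.mul h1
      convert this using 1
      ring
    set b : ℝ := max x (|R| + 1) with hb
    have hxb : x ≤ b := le_max_left _ _
    have hbR : R < |b| := by
      have h1 : |R| + 1 ≤ b := le_max_right _ _
      have := le_abs_self R
      have := le_abs_self b
      nlinarith [abs_nonneg R]
    have hgb : g b = 0 := by
      obtain ⟨h1, h2⟩ := hzero b hbR
      simp [hg, h1, h2]
    have hanti : AntitoneOn g (Set.Icc x b) := by
      apply antitoneOn_of_deriv_nonpos (convex_Icc x b)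
      · exact fun t _ => ((hd t).continuousAt).continuousWithinAt
      · exact fun t _ => ((hd t).differentiableAt).differentiableWithinAt
      · intro t ht
        rw [(hd t).deriv]
        have htx : x₀ ≤ t := by
          have := (Set.mem_Icc.mp (interior_subset ht)).1
          linarith
        have := hypos t htx
        nlinarith [Real.exp_pos (-t)]
    have := hanti (Set.left_mem_Icc.mpr hxb) (Set.right_mem_Icc.mpr hxb) hxb
    rw [hgb] at this
    simp only [hg] at this
    have hex := Real.exp_pos (-x)
    nlinarith
end

section
/- Let u ∈ H¹(ℝ) ∩ C¹(ℝ) and x₀ ∈ ℝ be such that u_x(x) ≥ u(x) for x ≤ x₀ and u_x(x) ≥ -u(x) for x ≥ x₀. Then ‖u‖_{L^∞(ℝ)} ≤ (1 + √2) ‖u‖_{L²(ℝ)}. -/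
open MeasureTheory Real
open Set Filter Topology

/-- Core integral estimate: if `c·exp(2(a-y)) ≤ f(y)²` on `(a,∞)` then `c/2 ≤ ∫ f²`. -/
lemma core_est (f : ℝ → ℝ) (a c : ℝ) (hc : 0 ≤ c)
    (hint : Integrable (fun y => (f y)^2))
    (hf : ∀ y, a < y → c * Real.exp (2*(a-y)) ≤ (f y)^2) :
    c / 2 ≤ ∫ y, (f y)^2 := by
  have hderiv : ∀ y ∈ Ici a,
      HasDerivAt (fun y => -(Real.exp (2*(a-y))/2)) (Real.exp (2*(a-y))) y := by
    intro y _
    have h1 : HasDerivAt (fun y : ℝ => 2*(a-y)) (-2) y := by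
      simpa using ((hasDerivAt_const y a).sub (hasDerivAt_id y)).const_mul (2:ℝ)
    have h2 := (Real.hasDerivAt_exp (2*(a-y))).comp y h1
    have h3 : HasDerivAt (fun y => -(Real.exp (2*(a-y))/2)) (-(Real.exp (2*(a-y)) * -2 / 2)) y :=
      (h2.div_const 2).neg
    convert h3 using 1
    ring
  have hnn : ∀ y ∈ Ioi a, 0 ≤ Real.exp (2*(a-y)) := fun y _ => (Real.exp_pos _).le
  have htend : Tendsto (fun y => -(Real.exp (2*(a-y))/2)) atTop (𝓝 0) := by
    have h1 : Tendsto (fun y : ℝ => 2*(a-y)) atTop atBot := by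
      apply Tendsto.const_mul_atBot (by norm_num : (0:ℝ) < 2)
      exact tendsto_atBot_add_const_left atTop a tendsto_neg_atTop_atBot
    have h2 := (Real.tendsto_exp_atBot).comp h1
    have := (h2.div_const 2).neg
    simpa using this
  have hIntExp : IntegrableOn (fun y => Real.exp (2*(a-y))) (Ioi a) :=
    integrableOn_Ioi_deriv_of_nonneg' hderiv hnn htend
  have hval : ∫ y in Ioi a, Real.exp (2*(a-y)) = 1/2 := by
    rw [integral_Ioi_of_hasDerivAt_of_nonneg' hderiv hnn htend]
    simp
  calc c/2 = ∫ y in Ioi a, c * Real.exp (2*(a-y)) := by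
        rw [integral_const_mul, hval]; ring
    _ ≤ ∫ y in Ioi a, (f y)^2 := by
        apply setIntegral_mono_on (hIntExp.const_mul c) hint.integrableOn measurableSet_Ioi
        intro y hy; exact hf y hy
    _ ≤ ∫ y, (f y)^2 :=
        setIntegral_le_integral hint (Filter.Eventually.of_forall fun y => sq_nonneg _)

/-- If `u ∈ H¹(ℝ) ∩ C¹(ℝ)` satisfies `u_x ≥ u` on `(-∞, x₀]` and `u_x ≥ -u` on `[x₀, ∞)`,
then `‖u‖_{L^∞} ≤ (1 + √2) ‖u‖_{L²}`. -/
theorem stmt4 (u : ℝ → ℝ) (x₀ : ℝ)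
    (hu : MemLp u 2 (volume : Measure ℝ))
    (hu' : MemLp (deriv u) 2 (volume : Measure ℝ))
    (hC1 : ContDiff ℝ 1 u)
    (h₁ : ∀ x ≤ x₀, u x ≤ deriv u x)
    (h₂ : ∀ x ≥ x₀, -u x ≤ deriv u x) :
    ∀ x, |u x| ≤ (1 + Real.sqrt 2) * Real.sqrt (∫ y, (u y)^2) := by
  intro x
  have hdiff : Differentiable ℝ u := hC1.differentiable one_ne_zero
  have hint : Integrable (fun y => (u y)^2) := by
    simpa [pow_two] using hu.integrable_sq
  set I := ∫ y, (u y)^2 with hIdef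
  have hI0 : 0 ≤ I := integral_nonneg fun y => sq_nonneg _
  -- reflection helper
  have hrefl_int : Integrable (fun y => (u (-y))^2) := by
    have := ((Measure.measurePreserving_neg (volume : Measure ℝ)).integrable_comp_emb
      (MeasurableEquiv.neg ℝ).measurableEmbedding (g := fun y => (u y)^2)).mpr hint
    exact this
  have hrefl_eq : ∫ y, (u (-y))^2 = I := by
    have := (Measure.measurePreserving_neg (volume : Measure ℝ)).integral_comp
      (MeasurableEquiv.neg ℝ).measurableEmbedding (fun y => (u y)^2)
    simpa using this
  -- monotonicity of g = exp(-y) u y on Iic x₀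
  have hgd : ∀ y, HasDerivAt (fun y => Real.exp (-y) * u y)
      (Real.exp (-y) * (deriv u y - u y)) y := by
    intro y
    have h1 : HasDerivAt (fun y : ℝ => Real.exp (-y)) (-Real.exp (-y)) y := by
      have h := (Real.hasDerivAt_exp (-y)).comp y (hasDerivAt_neg y)
      rw [show -Real.exp (-y) = Real.exp (-y) * -1 by ring]; exact h
    have h2 := h1.mul (hdiff y).hasDerivAt
    exact h2.congr_deriv (by ring)
  have hgmono : MonotoneOn (fun y => Real.exp (-y) * u y) (Iic x₀) := by
    apply monotoneOn_of_deriv_nonneg (convex_Iic x₀)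
    · exact fun y _ => ((hgd y).continuousAt).continuousWithinAt
    · exact fun y _ => ((hgd y).differentiableAt).differentiableWithinAt
    · intro y hy
      rw [interior_Iic] at hy
      rw [(hgd y).deriv]
      have := h₁ y (le_of_lt hy)
      have h3 : 0 ≤ deriv u y - u y := by linarith
      positivity
  -- monotonicity of h = exp(y) u y on Ici x₀
  have hhd : ∀ y, HasDerivAt (fun y => Real.exp y * u y)
      (Real.exp y * (deriv u y + u y)) y := by
    intro y
    have h2 := (Real.hasDerivAt_exp y).mul (hdiff y).hasDerivAt
    exact h2.congr_deriv (by ring)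
  have hhmono : MonotoneOn (fun y => Real.exp y * u y) (Ici x₀) := by
    apply monotoneOn_of_deriv_nonneg (convex_Ici x₀)
    · exact fun y _ => ((hhd y).continuousAt).continuousWithinAt
    · exact fun y _ => ((hhd y).differentiableAt).differentiableWithinAt
    · intro y hy
      rw [interior_Ici] at hy
      rw [(hhd y).deriv]
      have := h₂ y (le_of_lt hy)
      have h3 : 0 ≤ deriv u y + u y := by linarith
      positivity
  -- key: (u x)^2 ≤ 2 I
  have key : (u x)^2 / 2 ≤ I := by
    have hsq : ∀ t s : ℝ, s^2 * Real.exp (2*t) = (Real.exp t * s)^2 := by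
      intro t s
      have h : Real.exp (2*t) = Real.exp t * Real.exp t := by rw [← Real.exp_add, two_mul]
      rw [h]; ring
    rcases le_total x x₀ with hx | hx
    · rcases le_total (u x) 0 with hux | hux
      · -- u x ≤ 0, x ≤ x₀ : bound on (-∞, x)
        have := core_est (fun y => u (-y)) (-x) ((u x)^2) (sq_nonneg _) hrefl_int ?_
        · rw [hrefl_eq] at this; exact this
        intro y hy
        have hz : -y < x := by linarith [hy]
        have hmem : (-y : ℝ) ∈ Iic x₀ := le_of_lt (lt_of_lt_of_le hz hx)
        have h4 := hgmono hmem (mem_Iic.mpr hx) (le_of_lt hz)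
        -- exp(y) * u(-y) ≤ exp(-x) * u x  (note: at -y, exp(-(-y)) = exp y)
        simp only [neg_neg] at h4
        have h5 : u (-y) ≤ Real.exp (-y - x) * u x := by
          have hE : (0:ℝ) < Real.exp y := Real.exp_pos _
          have hm : Real.exp (-y - x) * Real.exp y = Real.exp (-x) := by
            rw [← Real.exp_add]; ring_nf
          nlinarith [h4]
        have h6 : Real.exp (-y - x) * u x ≤ 0 :=
          mul_nonpos_of_nonneg_of_nonpos (Real.exp_pos _).le hux
        have h7 : (Real.exp (-y - x) * u x)^2 ≤ (u (-y))^2 := by nlinarith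
        calc (u x)^2 * Real.exp (2*(-x - y))
            = (Real.exp (-y - x) * u x)^2 := by
              rw [show -x - y = -y - x from by ring, hsq]
          _ ≤ (u (-y))^2 := h7
      · -- 0 ≤ u x, x ≤ x₀ : cross to x₀, bound on (x₀, ∞)
        have hgle := hgmono (mem_Iic.mpr hx) (mem_Iic.mpr le_rfl) hx
        have hgle' : Real.exp (-x) * u x ≤ Real.exp (-x₀) * u x₀ := hgle
        have hux0 : Real.exp (x₀ - x) * u x ≤ u x₀ := by
          calc Real.exp (x₀ - x) * u x
              = Real.exp x₀ * (Real.exp (-x) * u x) := by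
                rw [show x₀ - x = x₀ + -x from by ring, Real.exp_add]; ring
            _ ≤ Real.exp x₀ * (Real.exp (-x₀) * u x₀) :=
                mul_le_mul_of_nonneg_left hgle' (Real.exp_pos _).le
            _ = u x₀ := by rw [← mul_assoc, ← Real.exp_add]; simp
        have huxx0 : u x ≤ u x₀ := by
          have h1 : (1:ℝ) ≤ Real.exp (x₀ - x) := Real.one_le_exp (by linarith)
          nlinarith
        have hux0' : 0 ≤ u x₀ := le_trans hux huxx0
        apply core_est u x₀ ((u x)^2) (sq_nonneg _) hint
        intro y hy
        have h4 := hhmono (mem_Ici.mpr le_rfl) (mem_Ici.mpr (le_of_lt hy)) (le_of_lt hy)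
        have h4' : Real.exp x₀ * u x₀ ≤ Real.exp y * u y := h4
        have h5 : Real.exp (x₀ - y) * u x₀ ≤ u y := by
          have hE : (0:ℝ) < Real.exp y := Real.exp_pos _
          have hm : Real.exp (x₀ - y) * Real.exp y = Real.exp x₀ := by
            rw [← Real.exp_add]; ring_nf
          nlinarith [h4']
        have h7 : 0 ≤ Real.exp (x₀ - y) * u x := by positivity
        have h8 : Real.exp (x₀ - y) * u x ≤ u y := by
          calc Real.exp (x₀ - y) * u x ≤ Real.exp (x₀ - y) * u x₀ :=
                mul_le_mul_of_nonneg_left huxx0 (Real.exp_pos _).le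
            _ ≤ u y := h5
        calc (u x)^2 * Real.exp (2*(x₀ - y)) = (Real.exp (x₀ - y) * u x)^2 := by
              rw [hsq]
          _ ≤ (u y)^2 := by nlinarith
    · rcases le_total 0 (u x) with hux | hux
      · -- 0 ≤ u x, x₀ ≤ x : bound on (x, ∞)
        apply core_est u x ((u x)^2) (sq_nonneg _) hint
        intro y hy
        have h4 := hhmono (mem_Ici.mpr hx) (mem_Ici.mpr (le_trans hx (le_of_lt hy))) (le_of_lt hy)
        have h4' : Real.exp x * u x ≤ Real.exp y * u y := h4
        have h5 : Real.exp (x - y) * u x ≤ u y := by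
          have hE : (0:ℝ) < Real.exp y := Real.exp_pos _
          have hm : Real.exp (x - y) * Real.exp y = Real.exp x := by
            rw [← Real.exp_add]; ring_nf
          nlinarith [h4']
        have h7 : 0 ≤ Real.exp (x - y) * u x := by positivity
        calc (u x)^2 * Real.exp (2*(x - y)) = (Real.exp (x - y) * u x)^2 := by
              rw [hsq]
          _ ≤ (u y)^2 := by nlinarith
      · -- u x ≤ 0, x₀ ≤ x : cross to x₀, bound on (-∞, x₀)
        have hhle := hhmono (mem_Ici.mpr le_rfl) (mem_Ici.mpr hx) hx
        have hhle' : Real.exp x₀ * u x₀ ≤ Real.exp x * u x := hhle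
        have hux0 : u x₀ ≤ Real.exp (x - x₀) * u x := by
          calc u x₀ = Real.exp (-x₀) * (Real.exp x₀ * u x₀) := by
                rw [← mul_assoc, ← Real.exp_add]; simp
            _ ≤ Real.exp (-x₀) * (Real.exp x * u x) :=
                mul_le_mul_of_nonneg_left hhle' (Real.exp_pos _).le
            _ = Real.exp (x - x₀) * u x := by
                rw [show x - x₀ = -x₀ + x from by ring, Real.exp_add]; ring
        have huxx0 : u x₀ ≤ u x := by
          have h1 : (1:ℝ) ≤ Real.exp (x - x₀) := Real.one_le_exp (by linarith)
          nlinarith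
        have := core_est (fun y => u (-y)) (-x₀) ((u x)^2) (sq_nonneg _) hrefl_int ?_
        · rw [hrefl_eq] at this; exact this
        intro y hy
        have hz : -y < x₀ := by linarith [hy]
        have h4 := hgmono (mem_Iic.mpr (le_of_lt hz)) (mem_Iic.mpr le_rfl) (le_of_lt hz)
        simp only [neg_neg] at h4
        -- exp(y) * u(-y) ≤ exp(-x₀) * u x₀
        have h5 : u (-y) ≤ Real.exp (-y - x₀) * u x₀ := by
          have hE : (0:ℝ) < Real.exp y := Real.exp_pos _
          have hm : Real.exp (-y - x₀) * Real.exp y = Real.exp (-x₀) := by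
            rw [← Real.exp_add]; ring_nf
          nlinarith [h4]
        have h8 : u (-y) ≤ Real.exp (-y - x₀) * u x := by
          calc u (-y) ≤ Real.exp (-y - x₀) * u x₀ := h5
            _ ≤ Real.exp (-y - x₀) * u x :=
              mul_le_mul_of_nonneg_left huxx0 (Real.exp_pos _).le
        have h6 : Real.exp (-y - x₀) * u x ≤ 0 :=
          mul_nonpos_of_nonneg_of_nonpos (Real.exp_pos _).le hux
        calc (u x)^2 * Real.exp (2*(-x₀ - y)) = (Real.exp (-y - x₀) * u x)^2 := by
              rw [show -x₀ - y = -y - x₀ from by ring, hsq]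
          _ ≤ (u (-y))^2 := by nlinarith
  -- conclude
  have h2I : (u x)^2 ≤ 2 * I := by linarith
  have habs : |u x| = Real.sqrt ((u x)^2) := (Real.sqrt_sq_eq_abs _).symm
  rw [habs]
  calc Real.sqrt ((u x)^2) ≤ Real.sqrt (2 * I) := Real.sqrt_le_sqrt h2I
    _ = Real.sqrt 2 * Real.sqrt I := Real.sqrt_mul (by norm_num) I
    _ ≤ (1 + Real.sqrt 2) * Real.sqrt I := by
        nlinarith [Real.sqrt_nonneg I, Real.sqrt_nonneg (2:ℝ)]
end

section
/- Let ψ ∈ W^{1,∞}(ℝ) ∩ L²(ℝ) and let u ∈ H¹(ℝ) ∩ C¹(ℝ) satisfy u_x ≥ u on (-∞, x₀] and u_x ≥ -u on [x₀, +∞) for some x₀ ∈ ℝ. Then ‖u - ψ‖_{L^∞(ℝ)} ≤ 2‖u - ψ‖_{L²}^{2/3} (1 + √2 ‖u - ψ‖_{L²}^{2/3} + ‖ψ‖_{L^∞} + ‖ψ'‖_{L^∞}). -/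
open MeasureTheory Real

set_option maxHeartbeats 1000000

/-- If `ψ ∈ W^{1,∞} ∩ L²` (with `|ψ| ≤ Mψ`, `|ψ'| ≤ Mψ'`) and `u ∈ H¹ ∩ C¹` satisfies
`u_x ≥ u` on `(-∞, x₀]` and `u_x ≥ -u` on `[x₀, ∞)`, then
`‖u - ψ‖_{L^∞} ≤ 2‖u-ψ‖_{L²}^{2/3}(1 + √2‖u-ψ‖_{L²}^{2/3} + ‖ψ‖_∞ + ‖ψ'‖_∞)`. -/
theorem stmt5 (u ψ : ℝ → ℝ) (x₀ Mψ Mψ' : ℝ)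
    (hψ2 : MemLp ψ 2 (volume : Measure ℝ))
    (hψdiff : Differentiable ℝ ψ)
    (hMψ : ∀ x, |ψ x| ≤ Mψ) (hMψ' : ∀ x, |deriv ψ x| ≤ Mψ')
    (hu : MemLp u 2 (volume : Measure ℝ))
    (hu' : MemLp (deriv u) 2 (volume : Measure ℝ))
    (hC1 : ContDiff ℝ 1 u)
    (h₁ : ∀ x ≤ x₀, u x ≤ deriv u x)
    (h₂ : ∀ x ≥ x₀, -u x ≤ deriv u x) :
    ∀ x, |u x - ψ x| ≤
      2 * (Real.sqrt (∫ y, (u y - ψ y)^2)) ^ ((2:ℝ)/3) *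
        (1 + Real.sqrt 2 * (Real.sqrt (∫ y, (u y - ψ y)^2)) ^ ((2:ℝ)/3) + Mψ + Mψ') := by
  have hud : Differentiable ℝ u := hC1.differentiable one_ne_zero
  have hMψ0 : 0 ≤ Mψ := (abs_nonneg _).trans (hMψ 0)
  have hMψ'0 : 0 ≤ Mψ' := (abs_nonneg _).trans (hMψ' 0)
  -- monotonicity of exp(∓x) u x
  have mono1 : MonotoneOn (fun x => Real.exp (-x) * u x) (Set.Iic x₀) := by
    have hder : ∀ x : ℝ, HasDerivAt (fun x => Real.exp (-x) * u x)
        (Real.exp (-x) * (deriv u x - u x)) x := by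
      intro x
      have h1 : HasDerivAt (fun x : ℝ => Real.exp (-x)) (-Real.exp (-x)) x := by
        simpa using (hasDerivAt_neg x).exp
      have := h1.mul (hud x).hasDerivAt
      exact this.congr_deriv (by ring)
    apply monotoneOn_of_deriv_nonneg (convex_Iic x₀)
    · exact (Continuous.mul (by continuity) hud.continuous).continuousOn
    · exact fun x _ => ((hder x).differentiableAt).differentiableWithinAt
    · intro x hx
      rw [interior_Iic] at hx
      rw [(hder x).deriv]
      have := h₁ x (le_of_lt hx)
      have hp := Real.exp_pos (-x)
      nlinarith
  have mono2 : MonotoneOn (fun x => Real.exp x * u x) (Set.Ici x₀) := by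
    have hder : ∀ x : ℝ, HasDerivAt (fun x => Real.exp x * u x)
        (Real.exp x * (deriv u x + u x)) x := by
      intro x
      have := (Real.hasDerivAt_exp x).mul (hud x).hasDerivAt
      exact this.congr_deriv (by ring)
    apply monotoneOn_of_deriv_nonneg (convex_Ici x₀)
    · exact (Continuous.mul Real.continuous_exp hud.continuous).continuousOn
    · exact fun x _ => ((hder x).differentiableAt).differentiableWithinAt
    · intro x hx
      rw [interior_Ici] at hx
      rw [(hder x).deriv]
      have := h₂ x (le_of_lt hx)
      have hp := Real.exp_pos x
      nlinarith
  -- step comparisons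
  have step1 : ∀ a b : ℝ, a ≤ b → b ≤ x₀ → Real.exp (b - a) * u a ≤ u b := by
    intro a b hab hb
    have h := mono1 (show a ∈ Set.Iic x₀ from le_trans hab hb) hb hab
    have h2 := mul_le_mul_of_nonneg_left h (Real.exp_pos b).le
    calc Real.exp (b - a) * u a = Real.exp b * (Real.exp (-a) * u a) := by
          rw [← mul_assoc, ← Real.exp_add]; ring_nf
      _ ≤ Real.exp b * (Real.exp (-b) * u b) := h2
      _ = u b := by rw [← mul_assoc, ← Real.exp_add]; simp
  have step2 : ∀ a b : ℝ, a ≤ b → x₀ ≤ a → Real.exp (a - b) * u a ≤ u b := by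
    intro a b hab ha
    have h := mono2 (show a ∈ Set.Ici x₀ from ha) (le_trans ha hab) hab
    have h2 := mul_le_mul_of_nonneg_left h (Real.exp_pos (-b)).le
    calc Real.exp (a - b) * u a = Real.exp (-b) * (Real.exp a * u a) := by
          rw [← mul_assoc, ← Real.exp_add]; ring_nf
      _ ≤ Real.exp (-b) * (Real.exp b * u b) := h2
      _ = u b := by rw [← mul_assoc, ← Real.exp_add]; simp
  have right_est : ∀ a b : ℝ, a ≤ b → ∃ t : ℝ, |t| ≤ b - a ∧ Real.exp t * u a ≤ u b := by
    intro a b hab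
    rcases le_total b x₀ with hb | hb
    · exact ⟨b - a, by rw [abs_of_nonneg (by linarith)], step1 a b hab hb⟩
    · rcases le_total x₀ a with ha | ha
      · refine ⟨a - b, ?_, step2 a b hab ha⟩
        rw [abs_of_nonpos (by linarith)]; linarith
      · refine ⟨2*x₀ - a - b, ?_, ?_⟩
        · rw [abs_le]; constructor <;> linarith
        · have hs1 := step1 a x₀ ha le_rfl
          have hs2 := step2 x₀ b hb le_rfl
          calc Real.exp (2*x₀ - a - b) * u a
              = Real.exp (x₀ - b) * (Real.exp (x₀ - a) * u a) := by
                rw [← mul_assoc, ← Real.exp_add]; ring_nf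
            _ ≤ Real.exp (x₀ - b) * u x₀ :=
                mul_le_mul_of_nonneg_left hs1 (Real.exp_pos _).le
            _ ≤ u b := hs2
  have left_est : ∀ a b : ℝ, b ≤ a → ∃ t : ℝ, |t| ≤ a - b ∧ u b ≤ Real.exp t * u a := by
    intro a b hba
    obtain ⟨t, ht, h⟩ := right_est b a hba
    refine ⟨-t, by rwa [abs_neg], ?_⟩
    have h2 := mul_le_mul_of_nonneg_left h (Real.exp_pos (-t)).le
    calc u b = Real.exp (-t) * (Real.exp t * u b) := by
          rw [← mul_assoc, ← Real.exp_add]; simp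
      _ ≤ Real.exp (-t) * u a := h2
  -- |exp t - 1| ≤ exp δ - 1
  have habs : ∀ t δ : ℝ, |t| ≤ δ → |Real.exp t - 1| ≤ Real.exp δ - 1 := by
    intro t δ h
    rw [abs_le] at h ⊢
    constructor
    · have h2 : Real.exp (-δ) ≤ Real.exp t := Real.exp_le_exp.2 h.1
      have h3 : Real.exp δ * Real.exp (-δ) = 1 := by rw [← Real.exp_add]; simp
      nlinarith [Real.exp_pos δ, sq_nonneg (Real.exp δ - 1)]
    · linarith [Real.exp_le_exp.2 h.2]
  have hexpb : ∀ δ : ℝ, 0 < δ → δ ≤ 1/5 → Real.exp δ ≤ 1 + (5/4)*δ := by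
    intro δ h0 h5
    have h2 : 1 - δ ≤ Real.exp (-δ) := by linarith [Real.add_one_le_exp (-δ)]
    have h3 : Real.exp δ * Real.exp (-δ) = 1 := by rw [← Real.exp_add]; simp
    nlinarith [Real.exp_pos δ, Real.exp_pos (-δ)]
  -- Lipschitz bound for ψ
  have hlip : ∀ a b : ℝ, |ψ b - ψ a| ≤ Mψ' * |b - a| := by
    intro a b
    have := Convex.norm_image_sub_le_of_norm_deriv_le (f := ψ) (s := Set.univ)
      (fun x _ => hψdiff x) (fun x _ => by simpa [Real.norm_eq_abs] using hMψ' x)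
      convex_univ (Set.mem_univ a) (Set.mem_univ b)
    simpa [Real.norm_eq_abs] using this
  set T := ∫ y, (u y - ψ y)^2 with hT
  have hTnn : 0 ≤ T := by
    rw [hT]; exact integral_nonneg fun y => sq_nonneg _
  have hInt : Integrable (fun y => (u y - ψ y)^2) (volume : Measure ℝ) := by
    simpa using (hu.sub hψ2).integrable_sq
  have hTub : ∀ c δ : ℝ, 0 ≤ δ → (∫ y in Set.Icc c (c + δ), (u y - ψ y)^2) ≤ T := by
    intro c δ _
    rw [hT]
    exact setIntegral_le_integral hInt (Filter.Eventually.of_forall fun y => sq_nonneg _)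
  clear_value T
  intro x
  set V := |u x - ψ x| with hV
  have hVnn : 0 ≤ V := by rw [hV]; exact abs_nonneg _
  have hUx : |u x| ≤ V + Mψ := by
    rw [hV]
    calc |u x| = |(u x - ψ x) + ψ x| := by ring_nf
      _ ≤ |u x - ψ x| + |ψ x| := abs_add_le _ _
      _ ≤ |u x - ψ x| + Mψ := by linarith [hMψ x]
  -- main interval estimate
  have main : ∀ δ : ℝ, 0 < δ →
      V ≤ Real.sqrt (T / δ) + (Real.exp δ - 1) * (V + Mψ) + δ * Mψ' := by
    intro δ hδ
    have hEnn : 0 ≤ Real.exp δ - 1 := by linarith [Real.add_one_le_exp δ]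
    rcases le_or_gt (V - (Real.exp δ - 1) * (V + Mψ) - δ * Mψ') 0 with hm0 | hm0
    · have := Real.sqrt_nonneg (T/δ); linarith
    set m := V - (Real.exp δ - 1) * (V + Mψ) - δ * Mψ' with hm
    clear_value m
    -- lower/upper perturbation bounds
    have key_lo : ∀ t a : ℝ, |t| ≤ δ → a - (Real.exp δ - 1) * |a| ≤ Real.exp t * a := by
      intro t a ht
      have h1 := habs t δ ht
      have h2 : -((Real.exp t - 1) * a) ≤ |Real.exp t - 1| * |a| := by
        rw [← abs_mul]; exact neg_le_abs _
      have h3 := mul_le_mul_of_nonneg_right h1 (abs_nonneg a)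
      nlinarith
    have key_hi : ∀ t a : ℝ, |t| ≤ δ → Real.exp t * a ≤ a + (Real.exp δ - 1) * |a| := by
      intro t a ht
      have h1 := habs t δ ht
      have h2 : (Real.exp t - 1) * a ≤ |Real.exp t - 1| * |a| := by
        rw [← abs_mul]; exact le_abs_self _
      have h3 := mul_le_mul_of_nonneg_right h1 (abs_nonneg a)
      nlinarith
    have hbound : ∃ c : ℝ, ∀ y ∈ Set.Icc c (c + δ), m ≤ |u y - ψ y| := by
      rcases le_or_gt 0 (u x - ψ x) with hvx | hvx
      · refine ⟨x, fun y hy => ?_⟩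
        obtain ⟨t, ht, hte⟩ := right_est x y hy.1
        have ht' : |t| ≤ δ := le_trans ht (by linarith [hy.2])
        have h1 : u x - (Real.exp δ - 1) * |u x| ≤ u y := le_trans (key_lo t (u x) ht') hte
        have h2 : ψ y - ψ x ≤ Mψ' * δ := by
          have habsyx : |y - x| ≤ δ := by
            rw [abs_of_nonneg (by linarith [hy.1])]; linarith [hy.2]
          calc ψ y - ψ x ≤ |ψ y - ψ x| := le_abs_self _
            _ ≤ Mψ' * |y - x| := hlip x y
            _ ≤ Mψ' * δ := mul_le_mul_of_nonneg_left habsyx hMψ'0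
        have hVeq : V = u x - ψ x := by rw [hV]; exact abs_of_nonneg hvx
        have h3 : (Real.exp δ - 1) * |u x| ≤ (Real.exp δ - 1) * (V + Mψ) :=
          mul_le_mul_of_nonneg_left hUx hEnn
        have h4 : m ≤ u y - ψ y := by rw [hm]; linarith
        exact le_trans h4 (le_abs_self _)
      · refine ⟨x - δ, fun y hy => ?_⟩
        have hy1 : x - δ ≤ y := hy.1
        have hy2 : y ≤ x := by linarith [hy.2]
        obtain ⟨t, ht, hte⟩ := left_est x y hy2
        have ht' : |t| ≤ δ := le_trans ht (by linarith)
        have h1 : u y ≤ u x + (Real.exp δ - 1) * |u x| := le_trans hte (key_hi t (u x) ht')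
        have h2 : ψ x - ψ y ≤ Mψ' * δ := by
          have habsyx : |x - y| ≤ δ := by rw [abs_of_nonneg (by linarith)]; linarith
          calc ψ x - ψ y ≤ |ψ x - ψ y| := le_abs_self _
            _ ≤ Mψ' * |x - y| := hlip y x
            _ ≤ Mψ' * δ := mul_le_mul_of_nonneg_left habsyx hMψ'0
        have hVeq : V = -(u x - ψ x) := by rw [hV]; exact abs_of_neg hvx
        have h3 : (Real.exp δ - 1) * |u x| ≤ (Real.exp δ - 1) * (V + Mψ) :=
          mul_le_mul_of_nonneg_left hUx hEnn
        have h4 : m ≤ -(u y - ψ y) := by rw [hm]; linarith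
        exact le_trans h4 (neg_le_abs _)
    obtain ⟨c, hc⟩ := hbound
    have h1 : ∀ y ∈ Set.Icc c (c + δ), m^2 ≤ (u y - ψ y)^2 := by
      intro y hy
      have := hc y hy
      nlinarith [sq_abs (u y - ψ y), abs_nonneg (u y - ψ y)]
    have hvol : (∫ _ in Set.Icc c (c + δ), (m^2 : ℝ)) = δ * m^2 := by
      rw [setIntegral_const, Real.volume_real_Icc_of_le (by linarith), smul_eq_mul]
      congr 1
      ring
    have h2 : δ * m^2 ≤ ∫ y in Set.Icc c (c + δ), (u y - ψ y)^2 := by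
      rw [← hvol]
      apply setIntegral_mono_on
      · exact integrableOn_const (by rw [Real.volume_Icc]; exact ENNReal.ofReal_ne_top)
      · exact hInt.integrableOn
      · exact measurableSet_Icc
      · exact h1
    have h3 := hTub c δ hδ.le
    have h5 : m ≤ Real.sqrt (T / δ) := by
      rw [← Real.sqrt_sq hm0.le]
      apply Real.sqrt_le_sqrt
      rw [le_div_iff₀ hδ]
      nlinarith
    linarith
  clear_value V
  clear hUx hInt hTub hlip right_est left_est step1 step2 mono1 mono2 habs hV
  -- final algebra
  set w := Real.sqrt 2 with hwdef
  have hw2 : w^2 = 2 := Real.sq_sqrt (by norm_num)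
  have hw0 : 0 ≤ w := Real.sqrt_nonneg 2
  have hw54 : 5/4 ≤ w := by nlinarith
  set s := Real.sqrt T ^ ((2:ℝ)/3) with hs
  have hsnn : 0 ≤ s := by rw [hs]; exact Real.rpow_nonneg (Real.sqrt_nonneg T) _
  have hs3 : s^3 = T := by
    rw [hs]
    rw [← Real.rpow_natCast (Real.sqrt T ^ ((2:ℝ)/3)) 3, ← Real.rpow_mul (Real.sqrt_nonneg T)]
    norm_num
    exact Real.sq_sqrt hTnn
  clear_value w s
  rcases eq_or_lt_of_le hsnn with hs0 | hs0
  · -- s = 0, so T = 0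
    have hT0 : T = 0 := by rw [← hs3, ← hs0]; ring
    have hC : ∀ δ : ℝ, 0 < δ → δ ≤ 1/5 → V ≤ δ * ((5/3)*Mψ + (4/3)*Mψ' + 1) := by
      intro δ hδ hδ5
      have hmain := main δ hδ
      rw [hT0] at hmain
      simp only [zero_div, Real.sqrt_zero, zero_add] at hmain
      have hexp := hexpb δ hδ hδ5
      have hEnn : 0 ≤ Real.exp δ - 1 := by linarith [Real.add_one_le_exp δ]
      nlinarith [mul_le_mul_of_nonneg_right hexp hVnn, mul_le_mul_of_nonneg_right hexp hMψ0,
        mul_pos hδ hδ]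
    have hV0 : V ≤ 0 := by
      by_contra hcon
      push_neg at hcon
      set C := (5/3)*Mψ + (4/3)*Mψ' + 1 with hCdef
      have hCpos : 0 < C := by rw [hCdef]; positivity
      have hδpos : 0 < min (1/5) (V / (2*C)) := by
        apply lt_min (by norm_num)
        positivity
      have hle := hC _ hδpos (min_le_left _ _)
      have h2 : min (1/5) (V / (2*C)) * C ≤ (V / (2*C)) * C :=
        mul_le_mul_of_nonneg_right (min_le_right _ _) hCpos.le
      have h3 : (V / (2*C)) * C = V / 2 := by field_simp
      rw [h3] at h2
      linarith
    rw [← hs0]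
    nlinarith
  · -- s > 0
    set A := 1 + w * s with hA
    have hA1 : 1 ≤ A := by nlinarith
    have hApos : 0 < A := by linarith
    have hA2 : 1 ≤ A^2 := by nlinarith
    clear_value A
    have hAsq : 0 < A^2 := by positivity
    set δ := s / A^2 with hδdef
    have hδpos : 0 < δ := by rw [hδdef]; positivity
    have hδA : δ * A^2 = s := by rw [hδdef]; field_simp
    clear_value δ
    have h5s : 5 * s ≤ A^2 := by nlinarith [sq_nonneg (w*s - 1)]
    have hδ15 : δ ≤ 1/5 := by nlinarith
    have hδs : δ ≤ s := by nlinarith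
    have hexp := hexpb δ hδpos hδ15
    have hEnn : 0 ≤ Real.exp δ - 1 := by linarith [Real.add_one_le_exp δ]
    have hmain := main δ hδpos
    have hsqrt : Real.sqrt (T / δ) = s * A := by
      have hTδ : T / δ = (s*A)^2 := by
        rw [div_eq_iff hδpos.ne', ← hs3, ← hδA]; ring
      rw [hTδ, Real.sqrt_sq (by positivity)]
    rw [hsqrt] at hmain
    set E := Real.exp δ - 1 with hEdef
    have hE54 : E ≤ (5/4)*δ := by rw [hEdef]; linarith
    clear_value E
    have hE14 : E ≤ 1/4 := by linarith
    set K := Mψ + Mψ' with hK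
    have hKnn : 0 ≤ K := by rw [hK]; linarith
    have hMnn : 0 ≤ 2*s*(A + K) := by positivity
    have h1 : s*A + E*Mψ + δ*Mψ' ≤ (1 - E) * (2*s*(A + K)) := by
      have e1 : E*Mψ ≤ (5/4)*δ*Mψ := mul_le_mul_of_nonneg_right hE54 hMψ0
      have e2 : E*(2*s*(A+K)) ≤ (5/4)*δ*(2*s*(A+K)) := mul_le_mul_of_nonneg_right hE54 hMnn
      have k1 : (5/2)*(δ*(s*A)) ≤ (1/2)*(s*A) := by
        nlinarith [mul_nonneg (show (0:ℝ) ≤ 1/5 - δ by linarith)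
          (mul_nonneg hsnn hApos.le)]
      have k2 : (5/4)*(δ*K) ≤ (5/4)*(s*K) := by
        nlinarith [mul_nonneg (show (0:ℝ) ≤ s - δ by linarith) hKnn]
      have k3 : (5/2)*(δ*(s*K)) ≤ (1/2)*(s*K) := by
        nlinarith [mul_nonneg (show (0:ℝ) ≤ 1/5 - δ by linarith)
          (mul_nonneg hsnn hKnn)]
      have k4 : 0 ≤ s*K := mul_nonneg hsnn hKnn
      have k5 : 0 ≤ s*A := mul_nonneg hsnn hApos.le
      have k6 : δ*Mψ' ≤ δ*K := by nlinarith [hδpos.le, hMψ0]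
      nlinarith [hK]
    have h2 : (1 - E)*V ≤ (1 - E)*(2*s*(A+K)) := by nlinarith [hmain, h1]
    have hpos : 0 < 1 - E := by linarith
    have hfin := (mul_le_mul_iff_right₀ hpos).mp h2
    rw [hK] at hfin
    linarith [hfin]
end
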